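/- Let G and H be locally finite games. Then G + H has infinite rank if and only if at least one of G and H has infinite rank. -/

import Mathlib

open scoped Classical

universe u

/-- `PosP Γ n` is the set `Pₙ` of positions from which the second player can win
within `n` rounds: `P₀` is the set of terminal positions, and
`Pₙ₊₁ = {x : every option of x has an option in Pₙ}`. -/
def PosP {V : Type*} (Γ : V → Finset V) : ℕ → Set V
  | 0 => {x | Γ x = ∅}
  | n + 1 => {x | ∀ y ∈ Γ x, ∃ z ∈ Γ y, z ∈ PosP Γ n}

/-- `PosN Γ n` is the set `Nₙ`: for `n ≥ 1`, `Nₙ = {x : some option of x lies in Pₙ₋₁}`. -/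
def PosN {V : Type*} (Γ : V → Finset V) : ℕ → Set V
  | 0 => ∅
  | n + 1 => {x | ∃ y ∈ Γ x, y ∈ PosP Γ n}

/-- The P-positions `𝒫 = ⋃ₙ Pₙ` (second player wins). -/
def PPos {V : Type*} (Γ : V → Finset V) : Set V := ⋃ n, PosP Γ n

/-- The N-positions `𝒩 = ⋃ₙ Nₙ` (first player wins). -/
def NPos {V : Type*} (Γ : V → Finset V) : Set V := ⋃ n, PosN Γ n

/-- The D-positions `𝒟 = V ∖ (𝒫 ∪ 𝒩)` (draws). -/
def DPos {V : Type*} (Γ : V → Finset V) : Set V := (PPos Γ ∪ NPos Γ)ᶜ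

/-- The mex (least natural number not attained) of the values `g y`, `y ∈ s`. -/
noncomputable def mexF {V : Type*} (s : Finset V) (g : V → ℕ∞) : ℕ :=
  sInf {n : ℕ | ∀ y ∈ s, g y ≠ (n : ℕ∞)}

/-- The approximants `𝒢ₙ` of the extended Sprague-Grundy function. -/
noncomputable def Gfun {V : Type*} (Γ : V → Finset V) : ℕ → V → ℕ∞
  | 0 => fun x => if Γ x = ∅ then 0 else ⊤
  | n + 1 => fun x =>
      let m := mexF (Γ x) (Gfun Γ n)
      if ∀ y ∈ Γ x, Gfun Γ n y ≤ (m : ℕ∞) ∨ ∃ z ∈ Γ y, Gfun Γ n z = (m : ℕ∞)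
      then (m : ℕ∞) else ⊤

/-- `x` has finite rank with (finite) Sprague-Grundy value `m`:
`𝒢ₙ(x) = m` for all sufficiently large `n`. -/
def HasGVal {V : Type*} (Γ : V → Finset V) (x : V) (m : ℕ) : Prop :=
  ∃ n₀ : ℕ, ∀ n ≥ n₀, Gfun Γ n x = (m : ℕ∞)

/-- `x` has infinite rank: `𝒢ₙ(x) = ∞` for all `n`. -/
def InfiniteRank {V : Type*} (Γ : V → Finset V) (x : V) : Prop :=
  ∀ n : ℕ, Gfun Γ n x = ⊤

/-- The rank of `x`: the least `n` with `𝒢ₙ(x) < ∞`, or `∞` if there is none. -/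
noncomputable def rank {V : Type*} (Γ : V → Finset V) (x : V) : ℕ∞ :=
  sInf ((↑) '' {n : ℕ | Gfun Γ n x ≠ ⊤})

/-- For `x` of infinite rank, the set `𝒜` with `𝒢(x) = ∞(𝒜)`:
the set of finite Sprague-Grundy values of finite-rank options of `x`. -/
def ValSet {V : Type*} (Γ : V → Finset V) (x : V) : Set ℕ :=
  {a | ∃ y ∈ Γ x, HasGVal Γ y a}

/-- The graph of the disjunctive sum: move in exactly one coordinate. -/
noncomputable def sumGraph {V W : Type*} (Γ : V → Finset V) (Δ : W → Finset W) :
    V × W → Finset (V × W) := fun p =>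
  (Γ p.1).image (fun u => (u, p.2)) ∪ (Δ p.2).image (fun w => (p.1, w))

/-- Two (positions of possibly different) games lie in the same outcome class. -/
def SameOutcome {V W : Type*} (Γ : V → Finset V) (x : V) (Δ : W → Finset W) (y : W) : Prop :=
  (x ∈ PPos Γ ↔ y ∈ PPos Δ) ∧ (x ∈ NPos Γ ↔ y ∈ NPos Δ) ∧ (x ∈ DPos Γ ↔ y ∈ DPos Δ)

/-- Equivalence of games: `G + X` and `H + X` have the same outcome for every
locally finite game `X`. -/
def GameEquiv {V W : Type*} (Γ : V → Finset V) (x : V) (Δ : W → Finset W) (y : W) : Prop :=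
  ∀ (X : Type u) (Ξ : X → Finset X) (z : X),
    SameOutcome (sumGraph Γ Ξ) (x, z) (sumGraph Δ Ξ) (y, z)

/-- The nim heap `*m`: positions `0, …, m`, where from `k` one can move to any `j < k`. -/
def nimGraph (m : ℕ) : Fin (m + 1) → Finset (Fin (m + 1)) :=
  fun k => Finset.univ.filter (fun j => j < k)

/-- The reduced graph `R(V)`: the induced graph on the complement of the P-positions. -/
noncomputable def reducedGraph {V : Type*} (Γ : V → Finset V) :
    {x : V // x ∉ PPos Γ} → Finset {x : V // x ∉ PPos Γ} := fun x =>
  (Γ x.1).subtype (fun y => y ∉ PPos Γ)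

/-- The vertex set of `R^{(k)}(V)`: positions which do not have finite rank with
Sprague-Grundy value `< k`. -/
def RkSet {V : Type*} (Γ : V → Finset V) (k : ℕ) : Set V :=
  {x | ¬ ∃ m < k, HasGVal Γ x m}

/-- The induced game graph `R^{(k)}(V)` on `RkSet Γ k`. -/
noncomputable def RkGraph {V : Type*} (Γ : V → Finset V) (k : ℕ) :
    RkSet Γ k → Finset (RkSet Γ k) := fun x =>
  (Γ x.1).subtype (fun y => y ∈ RkSet Γ k)

/-- `V` is `k`-stable: every infinite-rank position `x`, with `𝒢(x) = ∞(𝒜)`,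
has `{0, 1, …, k} ⊆ 𝒜`. -/
def kStable {V : Type*} (Γ : V → Finset V) (k : ℕ) : Prop :=
  ∀ x, InfiniteRank Γ x → ∀ j ≤ k, j ∈ ValSet Γ x

/-- `l` is a directed walk from `o` to `x` in the graph `Γ`. -/
def IsWalk {V : Type*} (Γ : V → Finset V) (o x : V) (l : List V) : Prop :=
  l.head? = some o ∧ l.getLast? = some x ∧ l.Chain' (fun a b => b ∈ Γ a)

/-- `Γ` is a tree with root `o`: `o` has no incoming arcs, and every vertex is
reached from `o` by a unique directed walk. -/
def IsTree {V : Type*} (Γ : V → Finset V) (o : V) : Prop :=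
  (∀ x, o ∉ Γ x) ∧ ∀ x, ∃! l : List V, IsWalk Γ o x l

/-- `f` is a mex labelling: `f x` is the least natural number not attained by `f`
on the options of `x`, for every `x`. -/
def MexLabelling {V : Type*} (Γ : V → Finset V) (f : V → ℕ) : Prop :=
  ∀ x, f x = sInf {n : ℕ | ∀ y ∈ Γ x, f y ≠ n}

/-!
Once `𝒢ₙ(x)` is finite it never changes, so a position of finite rank has a value. Finite values
of a sum add like nim heaps: `𝒢ₙ(x) = a` and `𝒢ₖ(y) = b` give `𝒢ₙ₊ₖ(x, y) = a ⊕ b`, by induction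
on `n + k`; so if both summands have finite rank, so does the sum. Conversely `𝒢_N(x, y) < ∞`
forces `𝒢_N(x) < ∞`, by induction on `N`. If `𝒢_{N-1}(x) = ∞`, the induction hypothesis gives
`𝒢_{N-1}(x, y') = ∞` for every `y'`, so every move certifying the value `m` of `(x, y)` is made
in the first component. Hence the options of `x` have mex `m ⊕ 𝒢(y)` at level `N - 1`, and each
of them either has a finite value there or reverses through that mex, i.e. `𝒢_N(x) < ∞`.
-/

section Mex

variable {V : Type*} {s : Finset V} {g : V → ℕ∞}

lemma mexF_ne {y : V} (hy : y ∈ s) : g y ≠ (mexF s g : ℕ∞) := by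
  have hne : {n : ℕ | ∀ y ∈ s, g y ≠ (n : ℕ∞)}.Nonempty := by
    refine ⟨s.sup (fun y => (g y).toNat) + 1, fun y hy hgy => ?_⟩
    have := Finset.le_sup (f := fun y => (g y).toNat) hy
    rw [hgy, ENat.toNat_natCast] at this
    omega
  exact Nat.sInf_mem hne y hy

lemma exists_eq_of_lt_mexF {j : ℕ} (hj : j < mexF s g) : ∃ y ∈ s, g y = j := by
  simpa using Nat.notMem_of_lt_sInf hj

lemma mexF_eq_of {m : ℕ} (hne : ∀ y ∈ s, g y ≠ m) (hlt : ∀ j < m, ∃ y ∈ s, g y = j) :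
    mexF s g = m := by
  refine le_antisymm (Nat.sInf_le hne) (not_lt.1 fun h => ?_)
  obtain ⟨y, hy, hym⟩ := hlt _ h
  exact mexF_ne hy hym

lemma mexF_image {W : Type*} [DecidableEq W] (f : V → W) (g : W → ℕ∞) :
    mexF (s.image f) g = mexF s (g ∘ f) := by
  simp [mexF]

end Mex

def IsMexOption {V : Type*} (Γ : V → Finset V) (g : V → ℕ∞) (m : ℕ) (y : V) : Prop :=
  g y ≠ m ∧ (g y ≤ m ∨ ∃ z ∈ Γ y, g z = m)

structure IsMexStep {V : Type*} (Γ : V → Finset V) (g : V → ℕ∞) (x : V) (m : ℕ) : Prop where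
  mexOption : ∀ y ∈ Γ x, IsMexOption Γ g m y
  exists_eq_of_lt : ∀ j < m, ∃ y ∈ Γ x, g y = j

lemma IsMexStep.ne_of_mem {V : Type*} {Γ : V → Finset V} {g : V → ℕ∞} {x y : V} {m : ℕ}
    (h : IsMexStep Γ g x m) (hy : y ∈ Γ x) : g y ≠ m :=
  (h.mexOption y hy).1

section Gfun

variable {V : Type*} {Γ : V → Finset V} {n N : ℕ} {x y : V} {m : ℕ}

lemma gfun_zero_eq_coe_iff : Gfun Γ 0 x = m ↔ Γ x = ∅ ∧ m = 0 := by
  simp only [Gfun]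
  split_ifs with h <;> simp [h, eq_comm]

lemma ne_zero_of_gfun_eq_coe (h : Gfun Γ n x = m) (hxm : Γ x ≠ ∅ ∨ m ≠ 0) : n ≠ 0 := by
  rintro rfl
  have := gfun_zero_eq_coe_iff.1 h
  tauto

lemma gfun_zero_ne_top_iff : Gfun Γ 0 x ≠ ⊤ ↔ Γ x = ∅ := by
  simp only [Gfun]
  split_ifs with h <;> simp [h]

lemma gfun_succ_ne_top_iff :
    Gfun Γ (n + 1) x ≠ ⊤ ↔ ∀ y ∈ Γ x, Gfun Γ n y ≤ (mexF (Γ x) (Gfun Γ n) : ℕ∞) ∨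
      ∃ z ∈ Γ y, Gfun Γ n z = (mexF (Γ x) (Gfun Γ n) : ℕ∞) := by
  simp only [Gfun]
  split_ifs with h
  · exact iff_of_true (ENat.natCast_ne_top _) h
  · exact iff_of_false (not_not.2 rfl) h

lemma gfun_succ_eq_coe_iff : Gfun Γ (n + 1) x = m ↔ IsMexStep Γ (Gfun Γ n) x m := by
  constructor
  · intro h
    obtain ⟨hm, hfin⟩ : mexF (Γ x) (Gfun Γ n) = m ∧ Gfun Γ (n + 1) x ≠ ⊤ := by
      simp only [Gfun] at h ⊢
      split_ifs at h ⊢ <;> simp_all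
    rw [gfun_succ_ne_top_iff, hm] at hfin
    subst hm
    exact ⟨fun y hy => ⟨mexF_ne hy, hfin y hy⟩, fun j hj => exists_eq_of_lt_mexF hj⟩
  · rintro ⟨hopt, hlt⟩
    have hm : mexF (Γ x) (Gfun Γ n) = m := mexF_eq_of (fun y hy => (hopt y hy).1) hlt
    simp only [Gfun]
    rw [hm, if_pos fun y hy => (hopt y hy).2]

lemma gfun_succ_eq_of_eq_coe (h : Gfun Γ n x = m) : Gfun Γ (n + 1) x = m := by
  induction n generalizing x m with
  | zero =>
    obtain ⟨hx, rfl⟩ := gfun_zero_eq_coe_iff.1 h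
    exact gfun_succ_eq_coe_iff.2 ⟨by simp [hx], by simp⟩
  | succ n ih =>
    have hstep := gfun_succ_eq_coe_iff.1 h
    refine gfun_succ_eq_coe_iff.2 ⟨fun y hy => ?_, fun j hj => ?_⟩
    · obtain ⟨hne, hle | ⟨z, hz, hzm⟩⟩ := hstep.mexOption y hy
      · obtain ⟨c, hc⟩ := ENat.ne_top_iff_exists.1 (ne_top_of_le_ne_top (ENat.natCast_ne_top m) hle)
        rw [← hc] at hne hle
        rw [IsMexOption, ih hc.symm]
        exact ⟨hne, Or.inl hle⟩
      · refine ⟨fun hym => ?_, Or.inr ⟨z, hz, ih hzm⟩⟩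
        exact (gfun_succ_eq_coe_iff.1 hym).ne_of_mem hz hzm
    · obtain ⟨y, hy, hyj⟩ := hstep.exists_eq_of_lt j hj
      exact ⟨y, hy, ih hyj⟩

lemma gfun_succ_of_ne_top (h : Gfun Γ n x ≠ ⊤) : Gfun Γ (n + 1) x = Gfun Γ n x := by
  obtain ⟨m, hm⟩ := ENat.ne_top_iff_exists.1 h
  exact (gfun_succ_eq_of_eq_coe hm.symm).trans hm

lemma gfun_of_le (h : Gfun Γ n x ≠ ⊤) (hnN : n ≤ N) : Gfun Γ N x = Gfun Γ n x := by
  induction N, hnN using Nat.le_induction with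
  | base => rfl
  | succ N _ ih => rw [gfun_succ_of_ne_top (ih ▸ h), ih]

lemma isMexStep_gfun (h : Gfun Γ n x = m) : IsMexStep Γ (Gfun Γ n) x m :=
  gfun_succ_eq_coe_iff.1 (gfun_succ_eq_of_eq_coe h)

/-- The truncation in `n - 1` is harmless: for `n = 0`, `x` is terminal and `m = 0`. -/
lemma isMexStep_gfun_pred (h : Gfun Γ n x = m) : IsMexStep Γ (Gfun Γ (n - 1)) x m := by
  cases n with
  | zero =>
    obtain ⟨hx, rfl⟩ := gfun_zero_eq_coe_iff.1 h
    exact ⟨by simp [hx], by simp⟩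
  | succ n => exact gfun_succ_eq_coe_iff.1 h

lemma isMexOption_gfun_of_ne_top (hy : Gfun Γ n y ≠ ⊤) (hym : Gfun Γ n y ≠ m) :
    IsMexOption Γ (Gfun Γ n) m y := by
  obtain ⟨c, hc⟩ := ENat.ne_top_iff_exists.1 hy
  refine ⟨hym, ?_⟩
  rw [← hc] at hym ⊢
  rcases lt_or_gt_of_ne (fun h => hym (congrArg _ h)) with hlt | hgt
  · exact Or.inl (by exact_mod_cast hlt.le)
  · exact Or.inr ((isMexStep_gfun hc.symm).exists_eq_of_lt m hgt)

lemma hasGVal_of_gfun_eq (h : Gfun Γ n x = m) : HasGVal Γ x m :=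
  ⟨n, fun _ hN => (gfun_of_le (h ▸ ENat.natCast_ne_top m) hN).trans h⟩

lemma HasGVal.unique {a b : ℕ} (ha : HasGVal Γ x a) (hb : HasGVal Γ x b) : a = b := by
  obtain ⟨n₁, h₁⟩ := ha
  obtain ⟨n₂, h₂⟩ := hb
  exact_mod_cast (h₁ _ (le_max_left n₁ n₂)).symm.trans (h₂ _ (le_max_right n₁ n₂))

lemma HasGVal.not_of_mem (hx : HasGVal Γ x m) (hy : y ∈ Γ x) : ¬HasGVal Γ y m := by
  rintro ⟨n₂, h₂⟩
  obtain ⟨n₁, h₁⟩ := hx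
  exact (isMexStep_gfun (h₁ _ (le_max_left n₁ n₂))).ne_of_mem hy (h₂ _ (le_max_right n₁ n₂))

end Gfun

section GraphMap

variable {V W : Type*} [DecidableEq W] {Γ : V → Finset V} {Δ : W → Finset W} (f : V → W)

lemma gfun_comp (hf : ∀ v, Δ (f v) = (Γ v).image f) (n : ℕ) (v : V) :
    Gfun Δ n (f v) = Gfun Γ n v := by
  induction n generalizing v with
  | zero => simp [Gfun, hf]
  | succ n ih =>
    have hcomp : Gfun Δ n ∘ f = Gfun Γ n := funext ih
    simp [Gfun, hf, mexF_image, hcomp, ih]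

lemma isMexOption_comp (hf : ∀ v, Δ (f v) = (Γ v).image f) {n m : ℕ} {v : V} :
    IsMexOption Δ (Gfun Δ n) m (f v) ↔ IsMexOption Γ (Gfun Γ n) m v := by
  simp [IsMexOption, hf, gfun_comp f hf]

end GraphMap

section SumGraph

variable {V W : Type*} {Γ : V → Finset V} {Δ : W → Finset W} {x x' : V} {y y' : W}

lemma mem_sumGraph {p : V × W} :
    p ∈ sumGraph Γ Δ (x, y) ↔ (∃ u ∈ Γ x, p = (u, y)) ∨ ∃ w ∈ Δ y, p = (x, w) := by
  simp [sumGraph, eq_comm]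

lemma mk_mem_sumGraph_left (hx' : x' ∈ Γ x) : (x', y) ∈ sumGraph Γ Δ (x, y) :=
  mem_sumGraph.2 (Or.inl ⟨x', hx', rfl⟩)

lemma mk_mem_sumGraph_right (hy' : y' ∈ Δ y) : (x, y') ∈ sumGraph Γ Δ (x, y) :=
  mem_sumGraph.2 (Or.inr ⟨y', hy', rfl⟩)

lemma sumGraph_eq_empty : sumGraph Γ Δ (x, y) = ∅ ↔ Γ x = ∅ ∧ Δ y = ∅ := by
  simp [sumGraph]

lemma sumGraph_swap (p : W × V) :
    sumGraph Γ Δ p.swap = (sumGraph Δ Γ p).image Prod.swap := by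
  ext q
  simp only [sumGraph, Finset.image_union, Finset.image_image, Finset.mem_union]
  tauto

lemma gfun_sumGraph_swap (n : ℕ) :
    Gfun (sumGraph Γ Δ) n (x, y) = Gfun (sumGraph Δ Γ) n (y, x) :=
  gfun_comp Prod.swap sumGraph_swap n (y, x)

lemma isMexOption_sumGraph_swap {n m : ℕ} :
    IsMexOption (sumGraph Γ Δ) (Gfun (sumGraph Γ Δ) n) m (x, y) ↔
      IsMexOption (sumGraph Δ Γ) (Gfun (sumGraph Δ Γ) n) m (y, x) :=
  isMexOption_comp Prod.swap sumGraph_swap (v := (y, x))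

end SumGraph

section XorFormula

variable {V W : Type*} {Γ : V → Finset V} {Δ : W → Finset W}

/-- Read off at every level `N ≥ n + k`, so that an induction on `N` absorbs stabilisation. -/
def XorFormulaAt (Γ : V → Finset V) (Δ : W → Finset W) (N : ℕ) : Prop :=
  ∀ (n k : ℕ) (x : V) (y : W) (a b : ℕ), n + k ≤ N → Gfun Γ n x = a → Gfun Δ k y = b →
    Gfun (sumGraph Γ Δ) N (x, y) = ((a ^^^ b : ℕ) : ℕ∞)

lemma XorFormulaAt.swap {N : ℕ} (h : XorFormulaAt Γ Δ N) : XorFormulaAt Δ Γ N := by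
  intro k n y x b a hkn hy hx
  rw [← gfun_sumGraph_swap, Nat.xor_comm]
  exact h n k x y a b (by omega) hx hy

lemma isMexOption_sumGraph_left {N n k : ℕ} {x x' : V} {y : W} {a b : ℕ}
    (ih : XorFormulaAt Γ Δ N) (hx : Gfun Γ n x = a) (hy : Gfun Δ k y = b)
    (hnk : n + k ≤ N + 1) (hx' : x' ∈ Γ x) :
    IsMexOption (sumGraph Γ Δ) (Gfun (sumGraph Γ Δ) N) (a ^^^ b) (x', y) := by
  have := ne_zero_of_gfun_eq_coe hx (Or.inl (Finset.ne_empty_of_mem hx'))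
  obtain ⟨hne, hle | ⟨z, hz, hza⟩⟩ := (isMexStep_gfun_pred hx).mexOption x' hx'
  · obtain ⟨c, hc⟩ := ENat.ne_top_iff_exists.1 (ne_top_of_le_ne_top (ENat.natCast_ne_top a) hle)
    have hval := ih _ _ _ _ _ _ (by omega) hc.symm hy
    refine isMexOption_gfun_of_ne_top (hval ▸ ENat.natCast_ne_top _) ?_
    rw [hval, Ne, Nat.cast_inj, Nat.xor_left_inj]
    exact fun hca => hne (hc ▸ congrArg _ hca)
  · have hval := ih _ _ _ _ _ _ (by omega) hza hy
    refine ⟨fun hx'y => ?_, Or.inr ⟨(z, y), mk_mem_sumGraph_left hz, hval⟩⟩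
    exact (isMexStep_gfun hx'y).ne_of_mem (mk_mem_sumGraph_left hz) hval

lemma xorFormulaAt (N : ℕ) : XorFormulaAt Γ Δ N := by
  induction N with
  | zero =>
    intro n k x y a b hnk hx hy
    obtain rfl : n = 0 := by omega
    obtain rfl : k = 0 := by omega
    obtain ⟨hΓ, rfl⟩ := gfun_zero_eq_coe_iff.1 hx
    obtain ⟨hΔ, rfl⟩ := gfun_zero_eq_coe_iff.1 hy
    exact gfun_zero_eq_coe_iff.2 ⟨sumGraph_eq_empty.2 ⟨hΓ, hΔ⟩, rfl⟩
  | succ N ih =>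
    intro n k x y a b hnk hx hy
    refine gfun_succ_eq_coe_iff.2 ⟨fun p hp => ?_, fun j hj => ?_⟩
    · rcases mem_sumGraph.1 hp with ⟨x', hx', rfl⟩ | ⟨y', hy', rfl⟩
      · exact isMexOption_sumGraph_left ih hx hy hnk hx'
      · rw [isMexOption_sumGraph_swap, Nat.xor_comm]
        exact isMexOption_sumGraph_left ih.swap hy hx (by omega) hy'
    · rcases Nat.lt_xor_cases hj with hja | hjb
      · have := ne_zero_of_gfun_eq_coe hx (Or.inr (by omega))
        obtain ⟨x', hx', hx'j⟩ := (isMexStep_gfun_pred hx).exists_eq_of_lt _ hja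
        refine ⟨(x', y), mk_mem_sumGraph_left hx', ?_⟩
        rw [ih _ _ _ _ _ _ (by omega) hx'j hy, xor_cancel_right]
      · have := ne_zero_of_gfun_eq_coe hy (Or.inr (by omega))
        obtain ⟨y', hy', hy'j⟩ := (isMexStep_gfun_pred hy).exists_eq_of_lt _ hjb
        refine ⟨(x, y'), mk_mem_sumGraph_right hy', ?_⟩
        rw [ih _ _ _ _ _ _ (by omega) hx hy'j, xor_xor_cancel_comm_assoc]

lemma HasGVal.sumGraph {x : V} {y : W} {a b : ℕ} (hx : HasGVal Γ x a) (hy : HasGVal Δ y b) :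
    HasGVal (sumGraph Γ Δ) (x, y) (a ^^^ b) := by
  obtain ⟨n, hn⟩ := hx
  obtain ⟨k, hk⟩ := hy
  exact ⟨n + k, fun N hN => xorFormulaAt N n k x y a b hN (hn n le_rfl) (hk k le_rfl)⟩

lemma xor_eq_of_gfun_sumGraph {n k N : ℕ} {x : V} {y : W} {a b m : ℕ}
    (hx : Gfun Γ n x = a) (hy : Gfun Δ k y = b) (hxy : Gfun (sumGraph Γ Δ) N (x, y) = m) :
    a ^^^ b = m :=
  ((hasGVal_of_gfun_eq hx).sumGraph (hasGVal_of_gfun_eq hy)).unique (hasGVal_of_gfun_eq hxy)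

end XorFormula

section Projection

variable {V W : Type*} {Γ : V → Finset V} {Δ : W → Finset W} {N : ℕ}

lemma mexF_eq_xor_of_gfun_eq_top {x : V} {y : W} {m b : ℕ}
    (ih : ∀ x y, Gfun (sumGraph Γ Δ) N (x, y) ≠ ⊤ → Gfun Γ N x ≠ ⊤ ∧ Gfun Δ N y ≠ ⊤)
    (hx : Gfun Γ N x = ⊤) (hxy : Gfun (sumGraph Γ Δ) (N + 1) (x, y) = m)
    (hy : Gfun Δ N y = b) :
    mexF (Γ x) (Gfun Γ N) = m ^^^ b := by
  have hS := gfun_succ_eq_coe_iff.1 hxy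
  have hxw : ∀ w, Gfun (sumGraph Γ Δ) N (x, w) = ⊤ := fun w => by
    by_contra h
    exact (ih x w h).1 hx
  have hfin : ∀ {w w' c}, Gfun (sumGraph Γ Δ) N (w, w') = (c : ℕ) → ∃ a : ℕ, Gfun Γ N w = a :=
    fun h => (ENat.ne_top_iff_exists.1 (ih _ _ (h ▸ ENat.natCast_ne_top _)).1).imp fun _ => Eq.symm
  apply mexF_eq_of
  · intro w hw hwv
    -- `(w, y)` would eventually share the value `m` of `(x, y)`, of which it is an option.
    refine (hasGVal_of_gfun_eq hxy).not_of_mem (mk_mem_sumGraph_left hw) ?_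
    simpa using (hasGVal_of_gfun_eq hwv).sumGraph (hasGVal_of_gfun_eq hy)
  · intro j hj
    rcases Nat.lt_xor_cases hj with hjm | hjb
    · obtain ⟨p, hp, hpj⟩ := hS.exists_eq_of_lt _ hjm
      rcases mem_sumGraph.1 hp with ⟨w, hw, rfl⟩ | ⟨w, -, rfl⟩
      · obtain ⟨c, hc⟩ := hfin hpj
        have hcj : c ^^^ b = j ^^^ b := xor_eq_of_gfun_sumGraph hc hy hpj
        exact ⟨w, hw, by rw [hc, Nat.xor_left_inj.1 hcj]⟩
      · exact absurd hpj (by simp [hxw])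
    · obtain ⟨y', hy', hy'j⟩ := (isMexStep_gfun hy).exists_eq_of_lt _ hjb
      obtain ⟨-, hle | ⟨q, hq, hqm⟩⟩ := hS.mexOption _ (mk_mem_sumGraph_right hy')
      · simp [hxw] at hle
      rcases mem_sumGraph.1 hq with ⟨w, hw, rfl⟩ | ⟨w, -, rfl⟩
      · obtain ⟨c, hc⟩ := hfin hqm
        have hcj : c ^^^ (j ^^^ m) = m := xor_eq_of_gfun_sumGraph hc hy'j hqm
        refine ⟨w, hw, ?_⟩
        rw [hc, (xor_eq_iff_left_eq _ _ _).1 hcj, xor_xor_cancel_comm_assoc]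
      · exact absurd hqm (by simp [hxw])

lemma gfun_succ_ne_top_left_of_sumGraph {x : V} {y : W}
    (ih : ∀ x y, Gfun (sumGraph Γ Δ) N (x, y) ≠ ⊤ → Gfun Γ N x ≠ ⊤ ∧ Gfun Δ N y ≠ ⊤)
    (h : Gfun (sumGraph Γ Δ) (N + 1) (x, y) ≠ ⊤) : Gfun Γ (N + 1) x ≠ ⊤ := by
  by_cases hx : Gfun Γ N x ≠ ⊤
  · rwa [gfun_succ_of_ne_top hx]
  rw [not_not] at hx
  obtain ⟨m, hm⟩ := ENat.ne_top_iff_exists.1 h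
  rw [gfun_succ_ne_top_iff]
  intro x' hx'
  have hfin : Gfun Γ N x' ≠ ⊤ → _ := fun h' => (isMexOption_gfun_of_ne_top h' (mexF_ne hx')).2
  obtain ⟨-, hle | ⟨q, hq, hqm⟩⟩ := (gfun_succ_eq_coe_iff.1 hm.symm).mexOption _
    (mk_mem_sumGraph_left (y := y) hx')
  · exact hfin (ih x' y (ne_top_of_le_ne_top (ENat.natCast_ne_top m) hle)).1
  rcases mem_sumGraph.1 hq with ⟨x'', hx'', rfl⟩ | ⟨y', -, rfl⟩
  · obtain ⟨hx''fin, hyfin⟩ := ih x'' y (hqm ▸ ENat.natCast_ne_top m)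
    obtain ⟨a, ha⟩ := ENat.ne_top_iff_exists.1 hx''fin
    obtain ⟨b, hb⟩ := ENat.ne_top_iff_exists.1 hyfin
    have hab : a ^^^ b = m := xor_eq_of_gfun_sumGraph ha.symm hb.symm hqm
    refine Or.inr ⟨x'', hx'', ?_⟩
    rw [← ha, mexF_eq_xor_of_gfun_eq_top ih hx hm.symm hb.symm, ← hab, xor_cancel_right]
  · exact hfin (ih x' y' (hqm ▸ ENat.natCast_ne_top m)).1

lemma gfun_ne_top_of_sumGraph (N : ℕ) (x : V) (y : W)
    (h : Gfun (sumGraph Γ Δ) N (x, y) ≠ ⊤) : Gfun Γ N x ≠ ⊤ ∧ Gfun Δ N y ≠ ⊤ := by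
  induction N generalizing x y with
  | zero =>
    obtain ⟨hx, hy⟩ := sumGraph_eq_empty.1 (gfun_zero_ne_top_iff.1 h)
    exact ⟨gfun_zero_ne_top_iff.2 hx, gfun_zero_ne_top_iff.2 hy⟩
  | succ N ih =>
    have ih' : ∀ y x, Gfun (sumGraph Δ Γ) N (y, x) ≠ ⊤ → Gfun Δ N y ≠ ⊤ ∧ Gfun Γ N x ≠ ⊤ :=
      fun y x h => (ih x y (by rwa [gfun_sumGraph_swap])).symm
    exact ⟨gfun_succ_ne_top_left_of_sumGraph ih h,
      gfun_succ_ne_top_left_of_sumGraph ih' (by rwa [← gfun_sumGraph_swap])⟩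

end Projection

/-- `G + H` has infinite rank iff at least one of `G`, `H` has
infinite rank. -/
theorem stmt3 {V W : Type*} (Γ : V → Finset V) (Δ : W → Finset W) (x : V) (y : W) :
    InfiniteRank (sumGraph Γ Δ) (x, y) ↔ (InfiniteRank Γ x ∨ InfiniteRank Δ y) := by
  constructor
  · intro h
    by_contra! hfin
    obtain ⟨⟨n, hn⟩, ⟨k, hk⟩⟩ : (∃ n, Gfun Γ n x ≠ ⊤) ∧ ∃ k, Gfun Δ k y ≠ ⊤ := by
      simpa [InfiniteRank] using hfin
    obtain ⟨a, ha⟩ := ENat.ne_top_iff_exists.1 hn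
    obtain ⟨b, hb⟩ := ENat.ne_top_iff_exists.1 hk
    have hsum := xorFormulaAt (n + k) n k x y a b le_rfl ha.symm hb.symm
    exact ENat.natCast_ne_top _ (hsum.symm.trans (h (n + k)))
  · intro h N
    by_contra hN
    obtain ⟨hx, hy⟩ := gfun_ne_top_of_sumGraph N x y hN
    rcases h with h | h
    exacts [hx (h N), hy (h N)]
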